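/- arXiv:1701.06104 — 2 statements merged into one kernel-verified Lean document; each statement's English description precedes it below -/
import Mathlib

section
/- Branching bisimilarity ∼_B on the states of a labelled transition system is an equivalence relation: it is reflexive, symmetric, and transitive. -/
structure LTS (S A : Type) where
  Tr : S → A → S → Prop
  init : S

variable {S S₁ S₂ S₃ A : Type}

/-- τ-stutter steps through states satisfying `P`. -/
def TauStutter (L : LTS S A) (τ : A) (P : S → Prop) : S → S → Prop :=
  Relation.ReflTransGen (fun x y => L.Tr x τ y ∧ P y)

/-- Branching bisimulation on the states of an LTS. -/
def IsBranchingBisim (L : LTS S A) (τ : A) (R : S → S → Prop) : Prop :=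
  Symmetric R ∧ ∀ s₁ s₂, R s₁ s₂ →
    ((∀ a s₁', a ≠ τ → L.Tr s₁ a s₁' → ∃ s₂', L.Tr s₂ a s₂' ∧ R s₁' s₂') ∧
     (∀ s₁', L.Tr s₁ τ s₁' →
        R s₁' s₂ ∨ ∃ l s₂', TauStutter L τ (R s₁) s₂ l ∧ L.Tr l τ s₂' ∧ R s₁' s₂'))

/-- Disjoint union of two LTSs. -/
def LTS.sum (L₁ : LTS S₁ A) (L₂ : LTS S₂ A) : LTS (S₁ ⊕ S₂) A where
  Tr := fun s a t =>
    match s, t with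
    | .inl s, .inl t => L₁.Tr s a t
    | .inr s, .inr t => L₂.Tr s a t
    | _, _ => False
  init := .inl L₁.init

/-- Symmetrized cross relation on the disjoint union. -/
def crossRel (R : S₁ → S₂ → Prop) : (S₁ ⊕ S₂) → (S₁ ⊕ S₂) → Prop
  | .inl a, .inr b => R a b
  | .inr b, .inl a => R a b
  | _, _ => False

/-- Branching bisimilarity of two states of an LTS. -/
def BranchBisimilar (L : LTS S A) (τ : A) (s t : S) : Prop :=
  ∃ R, IsBranchingBisim L τ R ∧ R s t

/-- Branching bisimilarity of two systems (relating their initial states). -/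
def SysBisim (L₁ : LTS S₁ A) (L₂ : LTS S₂ A) (τ : A) : Prop :=
  ∃ R : S₁ → S₂ → Prop,
    IsBranchingBisim (L₁.sum L₂) τ (crossRel R) ∧ R L₁.init L₂.init

/-- Finite traces of visible actions from a state (τ-steps erased). -/
inductive HasTrace (L : LTS S A) (τ : A) : S → List A → Prop
  | nil (s) : HasTrace L τ s []
  | tau {s s' w} : L.Tr s τ s' → HasTrace L τ s' w → HasTrace L τ s w
  | vis {s s' a w} : a ≠ τ → L.Tr s a s' → HasTrace L τ s' w → HasTrace L τ s (a :: w)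

def traces (L : LTS S A) (τ : A) : Set (List A) := {w | HasTrace L τ L.init w}

def TraceRefines (L₁ : LTS S₁ A) (L₂ : LTS S₂ A) (τ : A) : Prop :=
  traces L₁ τ ⊆ traces L₂ τ

def Reachable (L : LTS S A) (s t : S) : Prop :=
  Relation.ReflTransGen (fun x y => ∃ a, L.Tr x a y) s t

/-- A state is divergent if it admits an infinite path of τ-transitions. -/
def Divergent (L : LTS S A) (τ : A) (s : S) : Prop :=
  ∃ p : ℕ → S, p 0 = s ∧ ∀ i, L.Tr (p i) τ (p (i+1))

lemma tauStutter_mono {L : LTS S A} {τ : A} {P Q : S → Prop} (h : ∀ x, P x → Q x)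
    {a b : S} (hs : TauStutter L τ P a b) : TauStutter L τ Q a b :=
  Relation.ReflTransGen.mono (p := fun x y => L.Tr x τ y ∧ Q y)
    (fun _ _ hxy => ⟨hxy.1, h _ hxy.2⟩) _ _ hs

lemma tauStutter_pred {L : LTS S A} {τ : A} {P : S → Prop} {a b : S}
    (hs : TauStutter L τ P a b) (ha : P a) : P b := by
  induction hs with
  | refl => exact ha
  | tail _ h _ => exact h.2

lemma stutter_sim {L : LTS S A} {τ : A} {R T : S → S → Prop}
    (hT : IsBranchingBisim L τ T) {s t l u : S}
    (hst : R s t) (htu : T t u) (hstut : TauStutter L τ (R s) t l) :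
    ∃ m, TauStutter L τ (fun y => ∃ x, R s x ∧ T x y) u m ∧ T l m := by
  induction hstut with
  | refl => exact ⟨u, Relation.ReflTransGen.refl, htu⟩
  | @tail l₀ l hpre hstep ih =>
    obtain ⟨m₀, hum₀, hl₀m₀⟩ := ih
    have hsl₀ : R s l₀ := tauStutter_pred hpre hst
    rcases (hT.2 l₀ m₀ hl₀m₀).2 l hstep.1 with h | ⟨k, u', hmk, hk, hu'⟩
    · exact ⟨m₀, hum₀, h⟩
    · refine ⟨u', Relation.ReflTransGen.tail
        (Relation.ReflTransGen.trans hum₀ (tauStutter_mono ?_ hmk))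
        ⟨hk, ⟨l, hstep.2, hu'⟩⟩, hu'⟩
      exact fun y hy => ⟨l₀, hsl₀, hy⟩

lemma comp_transfer {L : LTS S A} {τ : A} {R T D : S → S → Prop}
    (hR : IsBranchingBisim L τ R) (hT : IsBranchingBisim L τ T)
    (hD : ∀ x y, (∃ z, R x z ∧ T z y) → D x y)
    {s t u : S} (hst : R s t) (htu : T t u) :
    (∀ a s', a ≠ τ → L.Tr s a s' → ∃ u', L.Tr u a u' ∧ D s' u') ∧
    (∀ s', L.Tr s τ s' →
        D s' u ∨ ∃ l u', TauStutter L τ (D s) u l ∧ L.Tr l τ u' ∧ D s' u') := by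
  constructor
  · intro a s' ha hs
    obtain ⟨t', ht, hst'⟩ := (hR.2 s t hst).1 a s' ha hs
    obtain ⟨u', hu, htu'⟩ := (hT.2 t u htu).1 a t' ha ht
    exact ⟨u', hu, hD _ _ ⟨t', hst', htu'⟩⟩
  · intro s' hs
    rcases (hR.2 s t hst).2 s' hs with h | ⟨l, t', hstut, hstep, hst'⟩
    · exact .inl (hD _ _ ⟨t, h, htu⟩)
    · obtain ⟨m, hum, hlm⟩ := stutter_sim hT hst htu hstut
      have hsl : R s l := tauStutter_pred hstut hst
      have hum' : TauStutter L τ (D s) u m :=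
        tauStutter_mono (fun y hy => hD _ _ hy) hum
      rcases (hT.2 l m hlm).2 t' hstep with h | ⟨k, u', hmk, hk, hu'⟩
      · rcases Relation.ReflTransGen.cases_tail hum' with hm | ⟨m₀, hum₀, hstep'⟩
        · subst hm
          exact .inl (hD _ _ ⟨t', hst', h⟩)
        · exact .inr ⟨m₀, m, hum₀, hstep'.1, hD _ _ ⟨t', hst', h⟩⟩
      · refine .inr ⟨k, u', Relation.ReflTransGen.trans hum'
          (tauStutter_mono ?_ hmk), hk, hD _ _ ⟨t', hst', hu'⟩⟩
        exact fun y hy => hD _ _ ⟨l, hsl, hy⟩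

/-- Branching bisimilarity on the states of an LTS is an equivalence relation. -/
theorem stmt1 (L : LTS S A) (τ : A) : Equivalence (BranchBisimilar L τ) := by
  constructor
  · intro s
    refine ⟨Eq, ⟨fun a b h => h.symm, ?_⟩, rfl⟩
    rintro s₁ s₂ rfl
    exact ⟨fun a s' _ h => ⟨s', h, rfl⟩,
      fun s' h => .inr ⟨s₁, s', Relation.ReflTransGen.refl, h, rfl⟩⟩
  · rintro s t ⟨R, hR, hst⟩
    exact ⟨R, hR, hR.1 hst⟩
  · rintro s t u ⟨R, hR, hst⟩ ⟨T, hT, htu⟩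
    refine ⟨fun x y => (∃ z, R x z ∧ T z y) ∨ (∃ z, T x z ∧ R z y), ⟨?_, ?_⟩,
      .inl ⟨t, hst, htu⟩⟩
    · rintro x y (⟨z, h1, h2⟩ | ⟨z, h1, h2⟩)
      · exact .inr ⟨z, hT.1 h2, hR.1 h1⟩
      · exact .inl ⟨z, hR.1 h2, hT.1 h1⟩
    · rintro s₁ s₂ (⟨z, h1, h2⟩ | ⟨z, h1, h2⟩)
      · exact comp_transfer hR hT (fun _ _ h => .inl h) h1 h2
      · exact comp_transfer hT hR (fun _ _ h => .inr h) h1 h2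
end

section
/- The composition of two branching bisimulations is a branching bisimulation: if R₁ is a branching bisimulation between Δ₁ and Δ₂, and R₂ is a branching bisimulation between Δ₂ and Δ₃, then the relational composition R₂ ∘ R₁ (symmetrized appropriately) is a branching bisimulation between Δ₁ and Δ₃; consequently ∼_B is transitive across systems. -/
variable {S S₁ S₂ S₃ A : Type}

section Aux

open Relation

variable {S' : Type}

/-- One-sided visible matching between two component LTSs. -/
def MatchVis (L : LTS S A) (L' : LTS S' A) (τ : A) (R : S → S' → Prop) : Prop :=
  ∀ s t, R s t → ∀ a s', a ≠ τ → L.Tr s a s' → ∃ t', L'.Tr t a t' ∧ R s' t'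

/-- One-sided τ matching between two component LTSs. -/
def MatchTau (L : LTS S A) (L' : LTS S' A) (τ : A) (R : S → S' → Prop) : Prop :=
  ∀ s t, R s t → ∀ s', L.Tr s τ s' →
    R s' t ∨ ∃ l t', Relation.ReflTransGen (fun x y => L'.Tr x τ y ∧ R s y) t l ∧
      L'.Tr l τ t' ∧ R s' t'

lemma chain_inl {L : LTS S A} {L' : LTS S' A} {τ : A} {Q : S ⊕ S' → Prop} {s : S}
    {t : S ⊕ S'}
    (h : Relation.ReflTransGen (fun x y => (L.sum L').Tr x τ y ∧ Q y) (.inl s) t) :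
    ∃ t', t = .inl t' ∧
      Relation.ReflTransGen (fun u v => L.Tr u τ v ∧ Q (.inl v)) s t' := by
  induction h with
  | refl => exact ⟨s, rfl, .refl⟩
  | @tail m c _ h ih =>
    obtain ⟨m', rfl, hm⟩ := ih
    obtain ⟨htr, hq⟩ := h
    cases c with
    | inl c => exact ⟨c, rfl, hm.tail ⟨htr, hq⟩⟩
    | inr c => exact (htr : False).elim

lemma chain_inr {L : LTS S A} {L' : LTS S' A} {τ : A} {Q : S ⊕ S' → Prop} {s : S'}
    {t : S ⊕ S'}
    (h : Relation.ReflTransGen (fun x y => (L.sum L').Tr x τ y ∧ Q y) (.inr s) t) :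
    ∃ t', t = .inr t' ∧
      Relation.ReflTransGen (fun u v => L'.Tr u τ v ∧ Q (.inr v)) s t' := by
  induction h with
  | refl => exact ⟨s, rfl, .refl⟩
  | @tail m c _ h ih =>
    obtain ⟨m', rfl, hm⟩ := ih
    obtain ⟨htr, hq⟩ := h
    cases c with
    | inr c => exact ⟨c, rfl, hm.tail ⟨htr, hq⟩⟩
    | inl c => exact (htr : False).elim

/-- Extract component-level matching data from a branching bisimulation on the sum. -/
lemma extract {L : LTS S A} {L' : LTS S' A} {τ : A} {R : S → S' → Prop}
    (h : IsBranchingBisim (L.sum L') τ (crossRel R)) :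
    MatchVis L L' τ R ∧ MatchTau L L' τ R ∧
      MatchVis L' L τ (flip R) ∧ MatchTau L' L τ (flip R) := by
  refine ⟨?_, ?_, ?_, ?_⟩
  · intro s t hR a s' ha htr
    obtain ⟨t', htr', hR'⟩ := (h.2 (.inl s) (.inr t) hR).1 a (.inl s') ha htr
    cases t' with
    | inl t' => exact (hR' : False).elim
    | inr t' => exact ⟨t', htr', hR'⟩
  · intro s t hR s' htr
    rcases (h.2 (.inl s) (.inr t) hR).2 (.inl s') htr with h' | ⟨l, t', hst, htr', hR'⟩
    · exact .inl h'
    · obtain ⟨l', rfl, hch⟩ := chain_inr hst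
      cases t' with
      | inl t' => exact (htr' : False).elim
      | inr t' => exact .inr ⟨l', t', hch, htr', hR'⟩
  · intro t s hR a t' ha htr
    obtain ⟨s', htr', hR'⟩ := (h.2 (.inr t) (.inl s) hR).1 a (.inr t') ha htr
    cases s' with
    | inr s' => exact (hR' : False).elim
    | inl s' => exact ⟨s', htr', hR'⟩
  · intro t s hR t' htr
    rcases (h.2 (.inr t) (.inl s) hR).2 (.inr t') htr with h' | ⟨l, s', hst, htr', hR'⟩
    · exact .inl h'
    · obtain ⟨l', rfl, hch⟩ := chain_inl hst
      cases s' with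
      | inr s' => exact (htr' : False).elim
      | inl s' => exact .inr ⟨l', s', hch, htr', hR'⟩

/-- Build a branching bisimulation on the sum from component-level matching data. -/
lemma build {L : LTS S A} {L' : LTS S' A} {τ : A} {R : S → S' → Prop}
    (v1 : MatchVis L L' τ R) (t1 : MatchTau L L' τ R)
    (v2 : MatchVis L' L τ (flip R)) (t2 : MatchTau L' L τ (flip R)) :
    IsBranchingBisim (L.sum L') τ (crossRel R) := by
  constructor
  · rintro (x | x) (y | y) h
    · exact h.elim
    · exact h
    · exact h
    · exact h.elim
  · rintro (s | s) (t | t) hR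
    · exact hR.elim
    · constructor
      · intro a s₁' ha htr
        cases s₁' with
        | inr s' => exact (htr : False).elim
        | inl s' =>
          obtain ⟨t', htr', hR'⟩ := v1 s t hR a s' ha htr
          exact ⟨.inr t', htr', hR'⟩
      · intro s₁' htr
        cases s₁' with
        | inr s' => exact (htr : False).elim
        | inl s' =>
          rcases t1 s t hR s' htr with h' | ⟨l, t', hch, htr', hR'⟩
          · exact .inl h'
          · refine .inr ⟨.inr l, .inr t', ?_, htr', hR'⟩
            exact Relation.ReflTransGen.lift (r := fun x y => L'.Tr x τ y ∧ R s y)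
              (p := fun x y => (L.sum L').Tr x τ y ∧ crossRel R (Sum.inl s) y)
              Sum.inr (fun a b hab => hab) _ _ hch
    · constructor
      · intro a s₁' ha htr
        cases s₁' with
        | inl t' => exact (htr : False).elim
        | inr t' =>
          obtain ⟨s', htr', hR'⟩ := v2 s t hR a t' ha htr
          exact ⟨.inl s', htr', hR'⟩
      · intro s₁' htr
        cases s₁' with
        | inl t' => exact (htr : False).elim
        | inr t' =>
          rcases t2 s t hR t' htr with h' | ⟨l, s', hch, htr', hR'⟩
          · exact .inl h'
          · refine .inr ⟨.inl l, .inl s', ?_, htr', hR'⟩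
            exact Relation.ReflTransGen.lift (r := fun x y => L.Tr x τ y ∧ flip R s y)
              (p := fun x y => (L.sum L').Tr x τ y ∧ crossRel R (Sum.inr s) y)
              Sum.inl (fun a b hab => hab) _ _ hch
    · exact hR.elim

/-- Transfer a stutter chain across a one-sided τ matching. -/
lemma transfer {L₂ : LTS S₂ A} {L₃ : LTS S₃ A} {τ : A} {R₂ : S₂ → S₃ → Prop}
    (mt : MatchTau L₂ L₃ τ R₂) (P : S₂ → Prop) {b b' : S₂} {c : S₃}
    (hchain : Relation.ReflTransGen (fun x y => L₂.Tr x τ y ∧ P y) b b')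
    (hPb : P b) (hbc : R₂ b c) :
    ∃ c', R₂ b' c' ∧ P b' ∧
      Relation.ReflTransGen (fun x y => L₃.Tr x τ y ∧ ∃ m, P m ∧ R₂ m y) c c' := by
  induction hchain with
  | refl => exact ⟨c, hbc, hPb, .refl⟩
  | @tail m b' _ hstep ih =>
    obtain ⟨c₁, hmc, hPm, hch⟩ := ih
    obtain ⟨htr, hPb'⟩ := hstep
    rcases mt _ _ hmc _ htr with h | ⟨l, t', hch₂, htr', hR'⟩
    · exact ⟨c₁, h, hPb', hch⟩
    · refine ⟨t', hR', hPb',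
        hch.trans ((Relation.ReflTransGen.mono (p := fun x y => L₃.Tr x τ y ∧ ∃ m, P m ∧ R₂ m y)
          (fun x y hxy => ⟨hxy.1, m, hPm, hxy.2⟩) _ _ hch₂).tail
          ⟨htr', b', hPb', hR'⟩)⟩

lemma compVis {L₁ : LTS S₁ A} {L₂ : LTS S₂ A} {L₃ : LTS S₃ A} {τ : A}
    {R₁ : S₁ → S₂ → Prop} {R₂ : S₂ → S₃ → Prop}
    (v1 : MatchVis L₁ L₂ τ R₁) (v2 : MatchVis L₂ L₃ τ R₂) :
    MatchVis L₁ L₃ τ (fun a c => ∃ b, R₁ a b ∧ R₂ b c) := by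
  rintro a c ⟨b, hab, hbc⟩ act a₁ ha htr
  obtain ⟨b₁, htr₂, hR₁⟩ := v1 a b hab act a₁ ha htr
  obtain ⟨c₁, htr₃, hR₂⟩ := v2 b c hbc act b₁ ha htr₂
  exact ⟨c₁, htr₃, b₁, hR₁, hR₂⟩

lemma compTau {L₁ : LTS S₁ A} {L₂ : LTS S₂ A} {L₃ : LTS S₃ A} {τ : A}
    {R₁ : S₁ → S₂ → Prop} {R₂ : S₂ → S₃ → Prop}
    (t1 : MatchTau L₁ L₂ τ R₁) (t2 : MatchTau L₂ L₃ τ R₂) :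
    MatchTau L₁ L₃ τ (fun a c => ∃ b, R₁ a b ∧ R₂ b c) := by
  rintro a c ⟨b, hab, hbc⟩ a₁ htr
  rcases t1 a b hab a₁ htr with h | ⟨l₂, b₁, hchain, htr₂, hR₁⟩
  · exact .inl ⟨b, h, hbc⟩
  · obtain ⟨c₂, hl₂c₂, hPl₂, hch'⟩ := transfer t2 (R₁ a) hchain hab hbc
    rcases t2 l₂ c₂ hl₂c₂ b₁ htr₂ with h | ⟨m', c₁, hch₂, htr₃, hR₂⟩
    · rcases hch'.cases_tail with rfl | ⟨m, hcm, hstep⟩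
      · exact .inl ⟨b₁, hR₁, h⟩
      · exact .inr ⟨m, c₂, hcm, hstep.1, b₁, hR₁, h⟩
    · exact .inr ⟨m', c₁,
        hch'.trans (Relation.ReflTransGen.mono (p := fun x y => L₃.Tr x τ y ∧ ∃ m, R₁ a m ∧ R₂ m y)
          (fun x y hxy => ⟨hxy.1, l₂, hPl₂, hxy.2⟩) _ _ hch₂),
        htr₃, b₁, hR₁, hR₂⟩

/-- The composition of two branching bisimulations is a branching bisimulation. -/
lemma comp_main (L₁ : LTS S₁ A) (L₂ : LTS S₂ A) (L₃ : LTS S₃ A) (τ : A)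
    (R₁ : S₁ → S₂ → Prop) (R₂ : S₂ → S₃ → Prop)
    (h₁ : IsBranchingBisim (L₁.sum L₂) τ (crossRel R₁))
    (h₂ : IsBranchingBisim (L₂.sum L₃) τ (crossRel R₂)) :
    IsBranchingBisim (L₁.sum L₃) τ (crossRel (fun a c => ∃ b, R₁ a b ∧ R₂ b c)) := by
  obtain ⟨v1, t1, v1', t1'⟩ := extract h₁
  obtain ⟨v2, t2, v2', t2'⟩ := extract h₂
  have hv' := compVis v2' v1'
  have ht' := compTau t2' t1'
  have hEq : (fun c a => ∃ b, flip R₂ c b ∧ flip R₁ b a) =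
      flip (fun a c => ∃ b, R₁ a b ∧ R₂ b c) := by
    funext c a
    exact propext ⟨fun ⟨b, h1, h2⟩ => ⟨b, h2, h1⟩, fun ⟨b, h1, h2⟩ => ⟨b, h2, h1⟩⟩
  rw [hEq] at hv' ht'
  exact build (compVis v1 v2) (compTau t1 t2) hv' ht'

end Aux

/-- The relational composition of two branching bisimulations is a branching bisimulation;
consequently branching bisimilarity of systems is transitive. -/
theorem stmt12 (L₁ : LTS S₁ A) (L₂ : LTS S₂ A) (L₃ : LTS S₃ A) (τ : A)
    (R₁ : S₁ → S₂ → Prop) (R₂ : S₂ → S₃ → Prop)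
    (h₁ : IsBranchingBisim (L₁.sum L₂) τ (crossRel R₁))
    (h₂ : IsBranchingBisim (L₂.sum L₃) τ (crossRel R₂)) :
    IsBranchingBisim (L₁.sum L₃) τ (crossRel (fun a c => ∃ b, R₁ a b ∧ R₂ b c)) ∧
    (∀ {T₁ T₂ T₃ : Type} (M₁ : LTS T₁ A) (M₂ : LTS T₂ A) (M₃ : LTS T₃ A),
      SysBisim M₁ M₂ τ → SysBisim M₂ M₃ τ → SysBisim M₁ M₃ τ) := by
  refine ⟨comp_main L₁ L₂ L₃ τ R₁ R₂ h₁ h₂, ?_⟩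
  rintro T₁ T₂ T₃ M₁ M₂ M₃ ⟨Ra, ha, ia⟩ ⟨Rb, hb, ib⟩
  exact ⟨fun a c => ∃ b, Ra a b ∧ Rb b c, comp_main M₁ M₂ M₃ τ Ra Rb ha hb,
    M₂.init, ia, ib⟩
end
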